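/- Let k ≥ 2, let S be a permutation-invariant Markov operator on L²(X^k, μ^{⊗k}), and set N := I ∘ F. If N ∘ S = S ∘ N, then: (1) S ∘ I = I ∘ S↓; (2) F ∘ S = S↓ ∘ F; and (3) N' ∘ S↓ = S↓ ∘ N', where N' is the analogous operator on L²(X^{k-1}, μ^{⊗(k-1)}) averaging the (k−1)-st coordinate, (N' h)(x₁,…,x_{k-1}) = ∫_X h(x₁,…,x_{k-2}, y) dμ(y). -/

import Mathlib

open MeasureTheory

noncomputable section

/-- The constant-one function as an element of `L²` of a finite measure. -/
noncomputable def lpOne {Z : Type*} [MeasurableSpace Z] (ν : Measure Z)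
    [IsFiniteMeasure ν] : Lp ℝ 2 ν :=
  Lp.const 2 ν (1 : ℝ)

/-- A Markov operator on `L²`: positivity-preserving, fixing the constants, with adjoint
fixing the constants. -/
def IsMarkovOp {Z : Type*} [MeasurableSpace Z] (ν : Measure Z) [IsFiniteMeasure ν]
    (S : Lp ℝ 2 ν →L[ℝ] Lp ℝ 2 ν) : Prop :=
  (∀ f : Lp ℝ 2 ν, (0 : Z → ℝ) ≤ᵐ[ν] ⇑f → (0 : Z → ℝ) ≤ᵐ[ν] ⇑(S f)) ∧
    S (lpOne ν) = lpOne ν ∧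
    ContinuousLinearMap.adjoint S (lpOne ν) = lpOne ν

/-- An operator on `L²(X^k, μ^{⊗k})` is permutation invariant if it commutes with the
Koopman operator of every coordinate permutation: whenever `g` is (a.e.) the Koopman image
`f ∘ π` of `f`, then `S g` is the Koopman image of `S f`. -/
def PermInv {X : Type*} [MeasurableSpace X] {k : ℕ} (ν : Measure (Fin k → X))
    (S : Lp ℝ 2 ν →L[ℝ] Lp ℝ 2 ν) : Prop :=
  ∀ (π : Equiv.Perm (Fin k)) (f g : Lp ℝ 2 ν),
    (⇑g =ᵐ[ν] fun x => f (fun i => x (π i))) →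
    (⇑(S g) =ᵐ[ν] fun x => (S f) (fun i => x (π i)))

/-!
Since `F ∘ I = 1`, we have `N ∘ I = I` and `F ∘ N = F`, so (1) and (2) are formal consequences
of `N ∘ S = S ∘ N`. For (3), let `T` be the Koopman operator of the transposition of the last two
coordinates. Computing `F` as integration over the last coordinate shows `F ∘ T ∘ I = N'`, and
since `S` commutes with `T`, (1) and (2) give
`N' ∘ S↓ = F T (I F S I) = F T S I = F S T I = (F S I) (F T I) = S↓ ∘ N'`.
-/

namespace ContinuousLinearMap

variable {R E E' : Type*} [Semiring R] [TopologicalSpace E] [AddCommMonoid E] [Module R E]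
  [TopologicalSpace E'] [AddCommMonoid E'] [Module R E']
  {I : E →L[R] E'} {F : E' →L[R] E} {S T : E' →L[R] E'}

theorem comp_eq_comp_compress_of_commute (hFI : F ∘L I = 1)
    (hN : (I ∘L F) ∘L S = S ∘L (I ∘L F)) : S ∘L I = I ∘L (F ∘L S ∘L I) := by
  ext f
  simpa [← comp_apply F I, hFI] using congr($hN (I f)).symm

theorem comp_eq_compress_comp_of_commute (hFI : F ∘L I = 1)
    (hN : (I ∘L F) ∘L S = S ∘L (I ∘L F)) : F ∘L S = (F ∘L S ∘L I) ∘L F := by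
  ext g
  simpa [← comp_apply F I, hFI] using congr(F ($hN g))

theorem comp_compress_eq_compress_comp_of_commute {P : E →L[R] E} (hFI : F ∘L I = 1)
    (hN : (I ∘L F) ∘L S = S ∘L (I ∘L F)) (hTS : T ∘L S = S ∘L T) (hP : F ∘L T ∘L I = P) :
    P ∘L (F ∘L S ∘L I) = (F ∘L S ∘L I) ∘L P := by
  subst hP
  ext f
  calc F (T (I (F (S (I f))))) = F (T (S (I f))) :=
        congr(F (T ($(comp_eq_comp_compress_of_commute hFI hN) f))).symm
    _ = F (S (T (I f))) := congr(F ($hTS (I f)))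
    _ = F (S (I (F (T (I f))))) := congr($(comp_eq_compress_comp_of_commute hFI hN) (T (I f)))

end ContinuousLinearMap

theorem Fin.init_snoc_comp_swap {α : Type*} {m : ℕ} (z : Fin (m + 1) → α) (y : α) :
    Fin.init (Fin.snoc z y ∘ Equiv.swap (Fin.last m).castSucc (Fin.last (m + 1))) =
      Fin.snoc (Fin.init z) y := by
  funext i
  refine Fin.lastCases ?_ (fun j => ?_) i
  · simp [Fin.init]
  · have hj : Equiv.swap (Fin.last m).castSucc (Fin.last (m + 1)) j.castSucc.castSucc =
        j.castSucc.castSucc :=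
      Equiv.swap_apply_of_ne_of_ne (by simp [(Fin.castSucc_lt_last j).ne])
        (Fin.castSucc_lt_last _).ne
    simp [Fin.init, hj]

section

variable {X : Type*} [MeasurableSpace X] (μ : Measure X)

section SigmaFinite

variable [SigmaFinite μ]

theorem measurePreserving_comp_perm {k : ℕ} (π : Equiv.Perm (Fin k)) :
    MeasurePreserving (fun (x : Fin k → X) (i : Fin k) => x (π i))
      (Measure.pi fun _ => μ) (Measure.pi fun _ => μ) :=
  measurePreserving_arrowCongr' (fun _ => μ) (fun _ => μ) π.symm (MeasurableEquiv.refl X)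
    fun _ => MeasurePreserving.id μ

def permKoopman {k : ℕ} (π : Equiv.Perm (Fin k)) :
    Lp ℝ 2 (Measure.pi fun _ : Fin k => μ) →L[ℝ] Lp ℝ 2 (Measure.pi fun _ : Fin k => μ) :=
  (Lp.compMeasurePreservingₗᵢ ℝ _ (measurePreserving_comp_perm μ π)).toContinuousLinearMap

theorem coeFn_permKoopman {k : ℕ} (π : Equiv.Perm (Fin k))
    (f : Lp ℝ 2 (Measure.pi fun _ : Fin k => μ)) :
    permKoopman μ π f =ᵐ[Measure.pi fun _ => μ] fun x => f (fun i => x (π i)) :=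
  Lp.coeFn_compMeasurePreserving f _

theorem PermInv.permKoopman_comp {k : ℕ}
    {S : Lp ℝ 2 (Measure.pi fun _ : Fin k => μ) →L[ℝ] Lp ℝ 2 (Measure.pi fun _ : Fin k => μ)}
    (hS : PermInv (Measure.pi fun _ : Fin k => μ) S) (π : Equiv.Perm (Fin k)) :
    permKoopman μ π ∘L S = S ∘L permKoopman μ π :=
  ContinuousLinearMap.ext fun f => Lp.ext
    ((coeFn_permKoopman μ π (S f)).trans (hS π f _ (coeFn_permKoopman μ π f)).symm)

variable (X) in
def snocMeasurableEquiv (n : ℕ) : (Fin n → X) × X ≃ᵐ (Fin (n + 1) → X) :=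
  MeasurableEquiv.prodComm.trans (MeasurableEquiv.piFinSuccAbove (fun _ => X) (Fin.last n)).symm

@[simp]
theorem snocMeasurableEquiv_apply (n : ℕ) (p : (Fin n → X) × X) :
    snocMeasurableEquiv X n p = Fin.snoc p.1 p.2 :=
  Fin.insertNth_last' p.2 p.1

theorem measurePreserving_snocMeasurableEquiv (n : ℕ) :
    MeasurePreserving (snocMeasurableEquiv X n)
      ((Measure.pi fun _ : Fin n => μ).prod μ) (Measure.pi fun _ : Fin (n + 1) => μ) :=
  (measurePreserving_piFinSuccAbove (fun _ : Fin (n + 1) => μ) (Fin.last n)).symm.comp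
    Measure.measurePreserving_swap

theorem integral_snoc_ae_eq_of_ae_eq {n : ℕ} {g₁ g₂ : (Fin (n + 1) → X) → ℝ}
    (h : g₁ =ᵐ[Measure.pi fun _ => μ] g₂) :
    (fun z => ∫ y, g₁ (Fin.snoc z y) ∂μ) =ᵐ[Measure.pi fun _ : Fin n => μ]
      fun z => ∫ y, g₂ (Fin.snoc z y) ∂μ := by
  have h' := (measurePreserving_snocMeasurableEquiv μ n).quasiMeasurePreserving.ae_eq_comp h
  filter_upwards [Measure.ae_ae_of_ae_prod h'] with z hz
  exact integral_congr_ae (by simpa [Filter.EventuallyEq] using hz)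

end SigmaFinite

variable [IsProbabilityMeasure μ]

theorem measurePreserving_init (n : ℕ) :
    MeasurePreserving (Fin.init (α := fun _ => X))
      (Measure.pi fun _ : Fin (n + 1) => μ) (Measure.pi fun _ : Fin n => μ) := by
  convert (measurePreserving_snd (μ := μ)).comp
    (measurePreserving_piFinSuccAbove (fun _ : Fin (n + 1) => μ) (Fin.last n)) using 1
  funext x
  simp

def initKoopman (n : ℕ) :
    Lp ℝ 2 (Measure.pi fun _ : Fin n => μ) →L[ℝ] Lp ℝ 2 (Measure.pi fun _ : Fin (n + 1) => μ) :=
  (Lp.compMeasurePreservingₗᵢ ℝ _ (measurePreserving_init μ n)).toContinuousLinearMap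

theorem coeFn_initKoopman {n : ℕ} (f : Lp ℝ 2 (Measure.pi fun _ : Fin n => μ)) :
    initKoopman μ n f =ᵐ[Measure.pi fun _ : Fin (n + 1) => μ] fun x => f (Fin.init x) :=
  Lp.coeFn_compMeasurePreserving f _

theorem eq_initKoopman {n : ℕ}
    {K : Lp ℝ 2 (Measure.pi fun _ : Fin n => μ) →L[ℝ] Lp ℝ 2 (Measure.pi fun _ : Fin (n + 1) => μ)}
    (hK : ∀ f, K f =ᵐ[Measure.pi fun _ : Fin (n + 1) => μ] fun x => f (Fin.init x)) :
    K = initKoopman μ n :=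
  ContinuousLinearMap.ext fun f => Lp.ext ((hK f).trans (coeFn_initKoopman μ f).symm)

theorem adjoint_initKoopman_comp_initKoopman (n : ℕ) :
    ContinuousLinearMap.adjoint (initKoopman μ n) ∘L initKoopman μ n = 1 :=
  LinearIsometry.adjoint_comp_self _

theorem adjoint_initKoopman_ae_eq {n : ℕ} (g : Lp ℝ 2 (Measure.pi fun _ : Fin (n + 1) => μ)) :
    ContinuousLinearMap.adjoint (initKoopman μ n) g =ᵐ[Measure.pi fun _ : Fin n => μ]
      fun z => ∫ y, g (Fin.snoc z y) ∂μ := by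
  have hsnoc := measurePreserving_snocMeasurableEquiv μ n
  have hg : Integrable (fun p => g (snocMeasurableEquiv X n p))
      ((Measure.pi fun _ : Fin n => μ).prod μ) :=
    hsnoc.integrable_comp_emb (MeasurableEquiv.measurableEmbedding _) |>.mpr
      (Lp.memLp g |>.integrable one_le_two)
  refine (Lp.memLp _ |>.integrable one_le_two).ae_eq_of_forall_setIntegral_eq _ _
    (by simpa using hg.integral_prod_left) fun A hA hAfin => ?_
  have hinit := measurePreserving_init μ n
  have hpre : snocMeasurableEquiv X n ⁻¹' (Fin.init ⁻¹' A) = A ×ˢ Set.univ := by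
    ext p
    simp
  calc ∫ z in A, ContinuousLinearMap.adjoint (initKoopman μ n) g z ∂_
      = inner ℝ (initKoopman μ n (indicatorConstLp 2 hA hAfin.ne (1 : ℝ))) g := by
        rw [← ContinuousLinearMap.adjoint_inner_right, L2.inner_indicatorConstLp_one]
    _ = ∫ x in Fin.init ⁻¹' A, g x ∂_ := by
        rw [show initKoopman μ n _ = _ from
          Lp.indicatorConstLp_compMeasurePreserving hA hAfin.ne 1 hinit,
          L2.inner_indicatorConstLp_one]
    _ = ∫ p in A ×ˢ Set.univ, g (snocMeasurableEquiv X n p) ∂_ := by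
        rw [← hpre, hsnoc.setIntegral_preimage_emb (MeasurableEquiv.measurableEmbedding _)]
    _ = ∫ z in A, ∫ y, g (Fin.snoc z y) ∂μ ∂_ := by
        rw [setIntegral_prod _ hg.integrableOn, Measure.restrict_univ]
        simp

theorem adjoint_initKoopman_comp_permKoopman_swap_comp_initKoopman (m : ℕ) :
    ContinuousLinearMap.adjoint (initKoopman μ (m + 1)) ∘L
        permKoopman μ (Equiv.swap (Fin.last m).castSucc (Fin.last (m + 1))) ∘L
          initKoopman μ (m + 1) =
      initKoopman μ m ∘L ContinuousLinearMap.adjoint (initKoopman μ m) := by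
  ext1 h
  refine Lp.ext ?_
  set τ := Equiv.swap (Fin.last m).castSucc (Fin.last (m + 1))
  have hτ : permKoopman μ τ (initKoopman μ (m + 1) h) =ᵐ[Measure.pi fun _ => μ]
      fun x => h (Fin.init (x ∘ τ)) :=
    (coeFn_permKoopman μ τ _).trans
      ((measurePreserving_comp_perm μ τ).quasiMeasurePreserving.ae_eq_comp (coeFn_initKoopman μ h))
  calc _ =ᵐ[Measure.pi fun _ => μ] fun z => ∫ y, h (Fin.init (Fin.snoc z y ∘ τ)) ∂μ :=
        (adjoint_initKoopman_ae_eq μ _).trans (integral_snoc_ae_eq_of_ae_eq μ hτ)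
    _ = fun z => ∫ y, h (Fin.snoc (Fin.init z) y) ∂μ := by
        simp only [τ, Fin.init_snoc_comp_swap]
    _ =ᵐ[Measure.pi fun _ => μ] _ :=
        ((measurePreserving_init μ m).quasiMeasurePreserving.ae_eq_comp
          (adjoint_initKoopman_ae_eq μ h)).symm.trans (coeFn_initKoopman μ _).symm

end

theorem stmt14_general {X : Type*} [MeasurableSpace X] (μ : Measure X) [IsProbabilityMeasure μ]
    (m : ℕ)
    (I : Lp ℝ 2 (Measure.pi fun _ : Fin (m + 1) => μ) →L[ℝ]
      Lp ℝ 2 (Measure.pi fun _ : Fin (m + 2) => μ))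
    (hI : ∀ f : Lp ℝ 2 (Measure.pi fun _ : Fin (m + 1) => μ),
      ⇑(I f) =ᵐ[Measure.pi fun _ : Fin (m + 2) => μ]
        fun x => f (fun i : Fin (m + 1) => x i.castSucc))
    (I' : Lp ℝ 2 (Measure.pi fun _ : Fin m => μ) →L[ℝ]
      Lp ℝ 2 (Measure.pi fun _ : Fin (m + 1) => μ))
    (hI' : ∀ f : Lp ℝ 2 (Measure.pi fun _ : Fin m => μ),
      ⇑(I' f) =ᵐ[Measure.pi fun _ : Fin (m + 1) => μ]
        fun x => f (fun i : Fin m => x i.castSucc))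
    (S : Lp ℝ 2 (Measure.pi fun _ : Fin (m + 2) => μ) →L[ℝ]
      Lp ℝ 2 (Measure.pi fun _ : Fin (m + 2) => μ))
    (hSP : PermInv (Measure.pi fun _ : Fin (m + 2) => μ) S)
    (hN : (I ∘L ContinuousLinearMap.adjoint I) ∘L S =
      S ∘L (I ∘L ContinuousLinearMap.adjoint I)) :
    (S ∘L I = I ∘L (ContinuousLinearMap.adjoint I ∘L S ∘L I)) ∧
    (ContinuousLinearMap.adjoint I ∘L S =
      (ContinuousLinearMap.adjoint I ∘L S ∘L I) ∘L ContinuousLinearMap.adjoint I) ∧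
    ((I' ∘L ContinuousLinearMap.adjoint I') ∘L
        (ContinuousLinearMap.adjoint I ∘L S ∘L I) =
      (ContinuousLinearMap.adjoint I ∘L S ∘L I) ∘L
        (I' ∘L ContinuousLinearMap.adjoint I')) := by
  obtain rfl := eq_initKoopman μ hI
  obtain rfl := eq_initKoopman μ hI'
  have hFI := adjoint_initKoopman_comp_initKoopman μ (m + 1)
  exact ⟨ContinuousLinearMap.comp_eq_comp_compress_of_commute hFI hN,
    ContinuousLinearMap.comp_eq_compress_comp_of_commute hFI hN,
    ContinuousLinearMap.comp_compress_eq_compress_comp_of_commute hFI hN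
      (hSP.permKoopman_comp μ _) (adjoint_initKoopman_comp_permKoopman_swap_comp_initKoopman μ m)⟩

/-- (Here `k = m + 2 ≥ 2`.)  Let `S` be a permutation-invariant Markov
operator on `L²(X^k, μ^{⊗k})`, let `I : L²(X^{k-1}) → L²(X^k)` be the operator ignoring the
last coordinate (`(I f)(x₁,…,x_k) = f(x₁,…,x_{k-1})`), `F := I*` and `N := I ∘ F`.  If
`N ∘ S = S ∘ N`, then `S ∘ I = I ∘ S↓`, `F ∘ S = S↓ ∘ F` and `N' ∘ S↓ = S↓ ∘ N'`, where
`S↓ = F ∘ S ∘ I` and `N' = I' ∘ I'*` is the analogous averaging operator on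
`L²(X^{k-1})`. -/
theorem stmt14 {X : Type*} [MeasurableSpace X] (μ : Measure X) [IsProbabilityMeasure μ]
    (m : ℕ)
    (I : Lp ℝ 2 (Measure.pi fun _ : Fin (m + 1) => μ) →L[ℝ]
      Lp ℝ 2 (Measure.pi fun _ : Fin (m + 2) => μ))
    (hI : ∀ f : Lp ℝ 2 (Measure.pi fun _ : Fin (m + 1) => μ),
      ⇑(I f) =ᵐ[Measure.pi fun _ : Fin (m + 2) => μ]
        fun x => f (fun i : Fin (m + 1) => x i.castSucc))
    (I' : Lp ℝ 2 (Measure.pi fun _ : Fin m => μ) →L[ℝ]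
      Lp ℝ 2 (Measure.pi fun _ : Fin (m + 1) => μ))
    (hI' : ∀ f : Lp ℝ 2 (Measure.pi fun _ : Fin m => μ),
      ⇑(I' f) =ᵐ[Measure.pi fun _ : Fin (m + 1) => μ]
        fun x => f (fun i : Fin m => x i.castSucc))
    (S : Lp ℝ 2 (Measure.pi fun _ : Fin (m + 2) => μ) →L[ℝ]
      Lp ℝ 2 (Measure.pi fun _ : Fin (m + 2) => μ))
    (hSM : IsMarkovOp (Measure.pi fun _ : Fin (m + 2) => μ) S)
    (hSP : PermInv (Measure.pi fun _ : Fin (m + 2) => μ) S)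
    (hN : (I ∘L ContinuousLinearMap.adjoint I) ∘L S =
      S ∘L (I ∘L ContinuousLinearMap.adjoint I)) :
    (S ∘L I = I ∘L (ContinuousLinearMap.adjoint I ∘L S ∘L I)) ∧
    (ContinuousLinearMap.adjoint I ∘L S =
      (ContinuousLinearMap.adjoint I ∘L S ∘L I) ∘L ContinuousLinearMap.adjoint I) ∧
    ((I' ∘L ContinuousLinearMap.adjoint I') ∘L
        (ContinuousLinearMap.adjoint I ∘L S ∘L I) =
      (ContinuousLinearMap.adjoint I ∘L S ∘L I) ∘L
        (I' ∘L ContinuousLinearMap.adjoint I')) :=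
  stmt14_general μ m I hI I' hI' S hSP hN
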